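/- Zero entropy production characterizes generalized Fermi-Dirac states (Proposition A.1): Let ω(k) = 1 − cos(2πk). Let ε↑, ε↓ : ℝ → ℝ and e↑, e↓ : ℝ → ℂ² all be 1-periodic, with 0 < ε_σ(k) < 1 and (e↑(k), e↓(k)) an orthonormal basis of ℂ² for every k. Set Φ_σ(k) = log((1 − ε_σ(k)) / ε_σ(k)). Assume that for all real k₁, k₂, k₃, k₄ with k₁ + k₂ − k₃ − k₄ ∈ ℤ and ω(k₁) + ω(k₂) = ω(k₃) + ω(k₄), and all σ₁, σ₂, σ₃, σ₄ ∈ {↑,↓}: either Φ_{σ₁}(k₁) + Φ_{σ₂}(k₂) = Φ_{σ₃}(k₃) + Φ_{σ₄}(k₄), or ⟨e_{σ₁}(k₁), e_{σ₃}(k₃)⟩⟨e_{σ₂}(k₂), e_{σ₄}(k₄)⟩ = ⟨e_{σ₁}(k₁), e_{σ₄}(k₄)⟩⟨e_{σ₂}(k₂), e_{σ₃}(k₃)⟩. Then there exist an orthonormal basis (w↑, w↓) of ℂ², reals a↑, a↓, and a 1-periodic function f : ℝ → ℝ with f(k) = −f(1/2 − k) for all k, such that for every k the matrix W(k) = ε↑(k)·e↑(k)e↑(k)*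 + ε↓(k)·e↓(k)e↓(k)* equals Σ_{σ∈{↑,↓}} (e^{f(k) − a_σ} + 1)^{−1} · w_σ w_σ*. -/

import Mathlib

/-- The nearest-neighbor dispersion relation of the Hubbard chain. -/
noncomputable def ω (k : ℝ) : ℝ := 1 - Real.cos (2 * Real.pi * k)

/-- The standard Hermitian inner product on ℂ², conjugate-linear in the first argument. -/
noncomputable def inn (u v : Fin 2 → ℂ) : ℂ := ∑ i, star (u i) * v i

/-- The outer product u u* of a vector u ∈ ℂ² as a 2×2 matrix. -/
noncomputable def outer (u : Fin 2 → ℂ) : Matrix (Fin 2) (Fin 2) ℂ :=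
  Matrix.of fun i j => u i * star (u j)

/-!
In ℂ² the exchange term factorizes, `⟨a,c⟩⟨b,d⟩ - ⟨a,d⟩⟨b,c⟩ = conj (a ∧ b) * (c ∧ d)`, so it
vanishes only if `a ∥ b` or `c ∥ d`. Since `ω k + ω (1/2 - k) = 2`, every quadruple
`(k, 1/2 - k, k', 1/2 - k')` is an allowed collision, and so is `(p, k, k, p)`.

If `ε↑ = ε↓` everywhere, `W` is scalar and the first family of collisions, with spins chosen to make
the exchange term nonzero, gives `Φ k + Φ (1/2 - k) = const`. Otherwise fix `p` with
`Φ↑ p ≠ Φ↓ p`. The collisions `(p, k, k, p)` force the eigenvectors at `k` to be those at `p`, up to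
order and phases, with the same gap `Φ↑ - Φ↓`; the first family then shows that `Φ` of the
eigenvalue along `e↑ p` at `k` plus `Φ` of the one along `e↓ p` at `1/2 - k` is constant. In both
cases `f` is `Φ` of the eigenvalue along `w↑`, shifted so that it is odd under `k ↦ 1/2 - k`.
-/

open Function Set Matrix

def IsOrthonormalPair (u v : Fin 2 → ℂ) : Prop :=
  inn u u = 1 ∧ inn v v = 1 ∧ inn u v = 0

def wedge (u v : Fin 2 → ℂ) : ℂ := u 0 * v 1 - u 1 * v 0

section LinearAlgebra

variable {u v x y : Fin 2 → ℂ}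

lemma inn_smul_left (c : ℂ) (x y : Fin 2 → ℂ) : inn (c • x) y = star c * inn x y := by
  simp only [inn, Fin.sum_univ_two, Pi.smul_apply, smul_eq_mul, star_mul']; ring

lemma inn_smul_right (c : ℂ) (x y : Fin 2 → ℂ) : inn x (c • y) = c * inn x y := by
  simp only [inn, Fin.sum_univ_two, Pi.smul_apply, smul_eq_mul]; ring

lemma star_inn (x y : Fin 2 → ℂ) : star (inn x y) = inn y x := by
  simp only [inn, Fin.sum_univ_two, star_add, star_mul', star_star]; ring

lemma ne_zero_of_inn_self_eq_one (hx : inn x x = 1) : x ≠ 0 := by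
  rintro rfl
  simp [inn] at hx

lemma outer_mulVec (u x : Fin 2 → ℂ) : outer u *ᵥ x = inn u x • u := by
  ext i
  simp only [outer, Matrix.mulVec, dotProduct, Matrix.of_apply, inn, Fin.sum_univ_two,
    Pi.smul_apply, smul_eq_mul]
  ring

lemma outer_smul {c : ℂ} (hc : star c * c = 1) (x : Fin 2 → ℂ) : outer (c • x) = outer x := by
  ext i j
  simp only [outer, Matrix.of_apply, Pi.smul_apply, smul_eq_mul, star_mul']
  linear_combination (x i * star (x j)) * hc

lemma outer_eq_of_eq_smul {c : ℂ} (hx : inn x x = 1) (hu : inn u u = 1) (h : x = c • u) :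
    outer x = outer u := by
  subst h
  rw [inn_smul_left, inn_smul_right, hu] at hx
  exact outer_smul (by linear_combination hx) u

lemma inn_mul_inn_sub_inn_mul_inn (a b c d : Fin 2 → ℂ) :
    inn a c * inn b d - inn a d * inn b c = star (wedge a b) * wedge c d := by
  simp only [inn, wedge, Fin.sum_univ_two, star_sub, star_mul']
  ring

lemma wedge_smul_smul (c d : ℂ) (u v : Fin 2 → ℂ) :
    wedge (c • u) (d • v) = c * d * wedge u v := by
  simp only [wedge, Pi.smul_apply, smul_eq_mul]
  ring

lemma wedge_smul_sub_wedge_smul (x y z : Fin 2 → ℂ) :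
    wedge y z • x = wedge x z • y - wedge x y • z := by
  ext i
  fin_cases i <;> simp only [wedge, Fin.isValue, Fin.zero_eta, Fin.mk_one, Pi.smul_apply,
    smul_eq_mul, Pi.sub_apply] <;> ring

namespace IsOrthonormalPair

lemma symm (h : IsOrthonormalPair u v) : IsOrthonormalPair v u :=
  ⟨h.2.1, h.1, by rw [← star_inn, h.2.2, star_zero]⟩

lemma outer_add_outer (h : IsOrthonormalPair u v) : outer u + outer v = 1 := by
  have hvu := h.symm.2.2
  obtain ⟨huu, hvv, huv⟩ := h
  -- the matrix with columns u, v is unitary: one-sided inverses of square matrices are two-sided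
  let M : Matrix (Fin 2) (Fin 2) ℂ := (Matrix.of ![u, v])ᵀ
  have hM : Mᴴ * M = 1 := by
    simp only [inn, Fin.sum_univ_two, Complex.star_def] at huu hvv huv hvu
    ext i j
    fin_cases i <;> fin_cases j <;>
      simpa [M, Matrix.mul_apply, Fin.sum_univ_two]
  ext i j
  have hij := congrArg (fun A => A i j) (mul_eq_one_comm.mp hM)
  simp only [M, Matrix.mul_apply, Fin.sum_univ_two] at hij
  simpa [outer, Complex.star_def] using hij

lemma eq_inn_smul_add_inn_smul (h : IsOrthonormalPair u v) (x : Fin 2 → ℂ) :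
    x = inn u x • u + inn v x • v := by
  rw [← outer_mulVec, ← outer_mulVec, ← Matrix.add_mulVec, h.outer_add_outer, Matrix.one_mulVec]

lemma star_wedge_mul_wedge (h : IsOrthonormalPair u v) : star (wedge u v) * wedge u v = 1 := by
  rw [← inn_mul_inn_sub_inn_mul_inn, h.1, h.2.1, h.2.2, zero_mul, mul_one, sub_zero]

lemma wedge_ne_zero (h : IsOrthonormalPair u v) : wedge u v ≠ 0 :=
  right_ne_zero_of_mul_eq_one h.star_wedge_mul_wedge

lemma exists_wedge_ne_zero {b : Bool → Fin 2 → ℂ} (hb : IsOrthonormalPair (b true) (b false))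
    (hx : x ≠ 0) : ∃ σ, wedge x (b σ) ≠ 0 := by
  by_contra! h
  have := wedge_smul_sub_wedge_smul x (b true) (b false)
  rw [h true, h false, zero_smul, zero_smul, sub_zero, smul_eq_zero] at this
  exact this.elim hb.wedge_ne_zero hx

lemma eq_smul_of_inn_eq_zero (huv : IsOrthonormalPair u v) (hxy : IsOrthonormalPair x y)
    (h : inn u x = 0) : (∃ c : ℂ, x = c • v) ∧ ∃ d : ℂ, y = d • u := by
  have hx := huv.eq_inn_smul_add_inn_smul x
  rw [h, zero_smul, zero_add] at hx
  have hvx : inn v x ≠ 0 := fun h0 =>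
    ne_zero_of_inn_self_eq_one hxy.1 (by rwa [h0, zero_smul] at hx)
  have hvy : inn v y = 0 := by
    have := hxy.2.2
    rw [hx, inn_smul_left, mul_eq_zero, star_eq_zero] at this
    exact this.resolve_left hvx
  have hy := huv.eq_inn_smul_add_inn_smul y
  rw [hvy, zero_smul, add_zero] at hy
  exact ⟨⟨_, hx⟩, _, hy⟩

lemma eq_smul_of_inn_mul_inn_eq_zero (huv : IsOrthonormalPair u v) (hxy : IsOrthonormalPair x y)
    (h : inn u x * inn y v = 0) : (∃ c : ℂ, x = c • v) ∧ ∃ d : ℂ, y = d • u := by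
  rcases mul_eq_zero.mp h with h | h
  · exact huv.eq_smul_of_inn_eq_zero hxy h
  · rw [← star_inn, star_eq_zero] at h
    exact (huv.symm.eq_smul_of_inn_eq_zero hxy.symm h).symm

lemma not_eq_smul_and_eq_smul (huv : IsOrthonormalPair u v) (hx : inn x x = 1) {c d : ℂ}
    (hxu : x = c • u) (hxv : x = d • v) : False := by
  have : inn (c • u) (d • v) = 1 := by rw [← hxu, ← hxv, hx]
  rw [inn_smul_left, inn_smul_right, huv.2.2] at this
  simp at this

lemma wedge_ne_zero_of_eq_smul (huv : IsOrthonormalPair u v) (hx : inn x x = 1)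
    (hy : inn y y = 1) {c d : ℂ} (hxu : x = c • u) (hyv : y = d • v) : wedge x y ≠ 0 := by
  have hc : c ≠ 0 := by rintro rfl; exact ne_zero_of_inn_self_eq_one hx (by rw [hxu, zero_smul])
  have hd : d ≠ 0 := by rintro rfl; exact ne_zero_of_inn_self_eq_one hy (by rw [hyv, zero_smul])
  rw [hxu, hyv, wedge_smul_smul]
  exact mul_ne_zero (mul_ne_zero hc hd) huv.wedge_ne_zero

end IsOrthonormalPair

end LinearAlgebra

section FermiDirac

noncomputable def fermi (x : ℝ) : ℝ := (Real.exp x + 1)⁻¹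

/-- The collision invariant `Φ`; on `(0, 1)` it inverts `fermi`. -/
noncomputable def invFermi (x : ℝ) : ℝ := Real.log ((1 - x) / x)

lemma fermi_invFermi {x : ℝ} (hx : x ∈ Ioo (0 : ℝ) 1) : fermi (invFermi x) = x := by
  have hx0 : x ≠ 0 := hx.1.ne'
  rw [fermi, invFermi, Real.exp_log (div_pos (by linarith [hx.2]) hx.1)]
  field_simp
  ring

lemma invFermi_injOn : InjOn invFermi (Ioo (0 : ℝ) 1) := fun x hx y hy h => by
  rw [← fermi_invFermi hx, h, fermi_invFermi hy]

lemma ofReal_fermi (x : ℝ) : ((fermi x : ℝ) : ℂ) = ((Real.exp x : ℂ) + 1)⁻¹ := by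
  push_cast [fermi]
  rfl

lemma Bool.eq_of_sub_apply_not_eq {g : Bool → ℝ} {d : ℝ} (hd : d ≠ 0) {s t : Bool}
    (hs : g s - g (!s) = d) (ht : g t - g (!t) = d) : s = t := by
  cases s <;> cases t <;> simp only [Bool.not_true, Bool.not_false] at hs ht <;>
    first | rfl | exact absurd (by linarith) hd

lemma exists_fermi_of_gap_of_pair {ν₁ ν₂ : ℝ → ℝ} {Δ K : ℝ} (h₁ : ∀ k, ν₁ k ∈ Ioo (0 : ℝ) 1)
    (h₂ : ∀ k, ν₂ k ∈ Ioo (0 : ℝ) 1) (hper : Periodic ν₁ 1)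
    (hgap : ∀ k, invFermi (ν₁ k) - invFermi (ν₂ k) = Δ)
    (hpair : ∀ k, invFermi (ν₁ k) + invFermi (ν₂ (1 / 2 - k)) = K) :
    ∃ (a : Bool → ℝ) (f : ℝ → ℝ), Periodic f 1 ∧ (∀ k, f k = -f (1 / 2 - k)) ∧
      ∀ k, fermi (f k - a true) = ν₁ k ∧ fermi (f k - a false) = ν₂ k := by
  refine ⟨fun σ => bif σ then -(K + Δ) / 2 else Δ - (K + Δ) / 2,
    fun k => invFermi (ν₁ k) - (K + Δ) / 2, fun k => by simp only [hper k], fun k => ?_,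
    fun k => ⟨?_, ?_⟩⟩
  · linarith [hpair k, hgap (1 / 2 - k)]
  · convert fermi_invFermi (h₁ k) using 2
    simp only [cond_true]
    ring
  · convert fermi_invFermi (h₂ k) using 2
    simp only [cond_false]
    linarith [hgap k]

end FermiDirac

lemma ω_add_ω_half_sub (k : ℝ) : ω k + ω (1 / 2 - k) = 2 := by
  rw [ω, ω, show 2 * Real.pi * (1 / 2 - k) = Real.pi - 2 * Real.pi * k by ring, Real.cos_pi_sub]
  ring

def ZeroEntropyProduction (ε : Bool → ℝ → ℝ) (e : Bool → ℝ → Fin 2 → ℂ) : Prop :=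
  ∀ k₁ k₂ k₃ k₄ : ℝ, (∃ m : ℤ, k₁ + k₂ - k₃ - k₄ = m) → ω k₁ + ω k₂ = ω k₃ + ω k₄ →
    ∀ σ₁ σ₂ σ₃ σ₄ : Bool,
      invFermi (ε σ₁ k₁) + invFermi (ε σ₂ k₂) = invFermi (ε σ₃ k₃) + invFermi (ε σ₄ k₄) ∨
      inn (e σ₁ k₁) (e σ₃ k₃) * inn (e σ₂ k₂) (e σ₄ k₄)
        = inn (e σ₁ k₁) (e σ₄ k₄) * inn (e σ₂ k₂) (e σ₃ k₃)

noncomputable def wigner (ε : Bool → ℝ → ℝ) (e : Bool → ℝ → Fin 2 → ℂ) (k : ℝ) :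
    Matrix (Fin 2) (Fin 2) ℂ :=
  (ε true k : ℂ) • outer (e true k) + (ε false k : ℂ) • outer (e false k)

namespace ZeroEntropyProduction

variable {ε : Bool → ℝ → ℝ} {e : Bool → ℝ → Fin 2 → ℂ}

lemma invFermi_add_eq (hzero : ZeroEntropyProduction ε e) {k k' : ℝ} {σ₁ σ₂ σ₃ σ₄ : Bool}
    (h₁₂ : wedge (e σ₁ k) (e σ₂ (1 / 2 - k)) ≠ 0) (h₃₄ : wedge (e σ₃ k') (e σ₄ (1 / 2 - k')) ≠ 0) :
    invFermi (ε σ₁ k) + invFermi (ε σ₂ (1 / 2 - k))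
      = invFermi (ε σ₃ k') + invFermi (ε σ₄ (1 / 2 - k')) := by
  refine (hzero k (1 / 2 - k) k' (1 / 2 - k') ⟨0, by push_cast; ring⟩
    (by rw [ω_add_ω_half_sub, ω_add_ω_half_sub]) σ₁ σ₂ σ₃ σ₄).resolve_right fun h => ?_
  rw [← sub_eq_zero, inn_mul_inn_sub_inn_mul_inn] at h
  exact mul_ne_zero (star_ne_zero.mpr h₁₂) h₃₄ h

lemma invFermi_pair_of_degenerate (hzero : ZeroEntropyProduction ε e)
    (hONB : ∀ k, IsOrthonormalPair (e true k) (e false k)) (hdeg : ∀ k, ε true k = ε false k)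
    (k k' : ℝ) :
    invFermi (ε true k) + invFermi (ε true (1 / 2 - k))
      = invFermi (ε true k') + invFermi (ε true (1 / 2 - k')) := by
  have hε : ∀ σ x, ε σ x = ε true x := fun σ x => by cases σ <;> simp [hdeg x]
  obtain ⟨σ₂, h₁₂⟩ := (hONB (1 / 2 - k)).exists_wedge_ne_zero (b := (e · (1 / 2 - k)))
    (ne_zero_of_inn_self_eq_one (hONB k).1)
  obtain ⟨σ₄, h₃₄⟩ := (hONB (1 / 2 - k')).exists_wedge_ne_zero (b := (e · (1 / 2 - k')))
    (ne_zero_of_inn_self_eq_one (hONB k').1)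
  simpa only [hε] using hzero.invFermi_add_eq h₁₂ h₃₄

lemma exists_aligned_spin (hzero : ZeroEntropyProduction ε e)
    (hONB : ∀ k, IsOrthonormalPair (e true k) (e false k)) {p : ℝ}
    (hp : invFermi (ε true p) - invFermi (ε false p) ≠ 0) (k : ℝ) :
    ∃ s : Bool, (∃ c : ℂ, e s k = c • e true p) ∧ (∃ c : ℂ, e (!s) k = c • e false p) ∧
      invFermi (ε s k) - invFermi (ε (!s) k) = invFermi (ε true p) - invFermi (ε false p) := by
  have hcoll : ∃ m : ℤ, p + k - k - p = m := ⟨0, by push_cast; ring⟩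
  have h₁ := hzero p k k p hcoll (add_comm _ _) true false true false
  have h₂ := hzero p k k p hcoll (add_comm _ _) true true false false
  rw [(hONB p).2.2, zero_mul] at h₁ h₂
  rcases h₁ with h₁ | h₁ <;> rcases h₂ with h₂ | h₂
  · exact absurd (by linarith) hp
  · obtain ⟨hy, hx⟩ := (hONB p).eq_smul_of_inn_mul_inn_eq_zero (hONB k).symm h₂
    exact ⟨true, hx, hy, by simp only [Bool.not_true]; linarith⟩
  · obtain ⟨hx, hy⟩ := (hONB p).eq_smul_of_inn_mul_inn_eq_zero (hONB k) h₁
    exact ⟨false, hy, hx, by simp only [Bool.not_false]; linarith⟩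
  · obtain ⟨⟨c, hc⟩, -⟩ := (hONB p).eq_smul_of_inn_mul_inn_eq_zero (hONB k) h₁
    obtain ⟨-, d, hd⟩ := (hONB p).eq_smul_of_inn_mul_inn_eq_zero (hONB k).symm h₂
    exact ((hONB p).not_eq_smul_and_eq_smul (hONB k).1 hd hc).elim

lemma invFermi_pair_of_aligned (hzero : ZeroEntropyProduction ε e)
    (hONB : ∀ k, IsOrthonormalPair (e true k) (e false k)) {w₁ w₂ : Fin 2 → ℂ}
    (hw : IsOrthonormalPair w₁ w₂) {s : ℝ → Bool} (hs₁ : ∀ k, ∃ c : ℂ, e (s k) k = c • w₁)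
    (hs₂ : ∀ k, ∃ c : ℂ, e (!s k) k = c • w₂) (k k' : ℝ) :
    invFermi (ε (s k) k) + invFermi (ε (!s (1 / 2 - k)) (1 / 2 - k))
      = invFermi (ε (s k') k') + invFermi (ε (!s (1 / 2 - k')) (1 / 2 - k')) := by
  have hunit : ∀ σ x, inn (e σ x) (e σ x) = 1 := fun σ x => by
    cases σ
    exacts [(hONB x).2.1, (hONB x).1]
  have hwedge : ∀ x, wedge (e (s x) x) (e (!s (1 / 2 - x)) (1 / 2 - x)) ≠ 0 := fun x =>
    hw.wedge_ne_zero_of_eq_smul (hunit _ _) (hunit _ _) (hs₁ x).choose_spec (hs₂ _).choose_spec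
  exact hzero.invFermi_add_eq (hwedge k) (hwedge k')

end ZeroEntropyProduction

lemma wigner_eq_of_aligned {ε : Bool → ℝ → ℝ} {e : Bool → ℝ → Fin 2 → ℂ} {k : ℝ}
    (he : IsOrthonormalPair (e true k) (e false k)) {w₁ w₂ : Fin 2 → ℂ}
    (hw : IsOrthonormalPair w₁ w₂) {s : Bool} (hs₁ : ∃ c : ℂ, e s k = c • w₁)
    (hs₂ : ∃ c : ℂ, e (!s) k = c • w₂) :
    wigner ε e k = (ε s k : ℂ) • outer w₁ + (ε (!s) k : ℂ) • outer w₂ := by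
  obtain ⟨c₁, hc₁⟩ := hs₁
  obtain ⟨c₂, hc₂⟩ := hs₂
  cases s
  · rw [wigner, outer_eq_of_eq_smul he.2.1 hw.1 hc₁, outer_eq_of_eq_smul he.1 hw.2.1 hc₂, add_comm]
    rfl
  · rw [wigner, outer_eq_of_eq_smul he.1 hw.1 hc₁, outer_eq_of_eq_smul he.2.1 hw.2.1 hc₂]
    rfl

/-- The spin index `σ : Bool` encodes `↑ = true`, `↓ = false`. -/
theorem stmt_14_general (ε : Bool → ℝ → ℝ) (e : Bool → ℝ → Fin 2 → ℂ)
    (hεper : ∀ σ, Function.Periodic (ε σ) 1)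
    (hε : ∀ σ k, ε σ k ∈ Set.Ioo (0:ℝ) 1)
    (hnorm : ∀ σ k, inn (e σ k) (e σ k) = 1)
    (horth : ∀ k, inn (e true k) (e false k) = 0)
    (hzero : ∀ k₁ k₂ k₃ k₄ : ℝ, (∃ m : ℤ, k₁ + k₂ - k₃ - k₄ = m) →
      ω k₁ + ω k₂ = ω k₃ + ω k₄ →
      ∀ σ₁ σ₂ σ₃ σ₄ : Bool,
        (Real.log ((1 - ε σ₁ k₁) / ε σ₁ k₁) + Real.log ((1 - ε σ₂ k₂) / ε σ₂ k₂)
          = Real.log ((1 - ε σ₃ k₃) / ε σ₃ k₃) + Real.log ((1 - ε σ₄ k₄) / ε σ₄ k₄)) ∨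
        inn (e σ₁ k₁) (e σ₃ k₃) * inn (e σ₂ k₂) (e σ₄ k₄)
          = inn (e σ₁ k₁) (e σ₄ k₄) * inn (e σ₂ k₂) (e σ₃ k₃)) :
    ∃ (w : Bool → Fin 2 → ℂ) (a : Bool → ℝ) (f : ℝ → ℝ),
      (∀ σ, inn (w σ) (w σ) = 1) ∧ inn (w true) (w false) = 0 ∧
      Function.Periodic f 1 ∧ (∀ k : ℝ, f k = -f (1/2 - k)) ∧
      ∀ k : ℝ,
        (ε true k : ℂ) • outer (e true k) + (ε false k : ℂ) • outer (e false k)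
          = ((Real.exp (f k - a true) + 1)⁻¹ : ℂ) • outer (w true)
            + ((Real.exp (f k - a false) + 1)⁻¹ : ℂ) • outer (w false) := by
  have hzero : ZeroEntropyProduction ε e := hzero
  have hONB k : IsOrthonormalPair (e true k) (e false k) := ⟨hnorm true k, hnorm false k, horth k⟩
  by_cases hdeg : ∀ k, ε true k = ε false k
  · -- `W k` is scalar, so any orthonormal basis diagonalizes it
    obtain ⟨a, f, hf, hodd, hfermi⟩ := exists_fermi_of_gap_of_pair (hε true) (hε true)
      (hεper true) (fun _ => sub_self _) (hzero.invFermi_pair_of_degenerate hONB hdeg · 0)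
    refine ⟨(e · 0), a, f, (hnorm · 0), horth 0, hf, hodd, fun k => ?_⟩
    rw [← ofReal_fermi, ← ofReal_fermi, (hfermi k).1, (hfermi k).2, ← hdeg k, ← smul_add,
      ← smul_add, (hONB k).outer_add_outer, (hONB 0).outer_add_outer]
  obtain ⟨p, hp⟩ := not_forall.mp hdeg
  have hΔ : invFermi (ε true p) - invFermi (ε false p) ≠ 0 :=
    sub_ne_zero.mpr fun h => hp (invFermi_injOn (hε true p) (hε false p) h)
  choose s hs₁ hs₂ hgap using hzero.exists_aligned_spin hONB hΔ
  -- the gap `Δ ≠ 0` tells the two spins apart, so `s` inherits the periodicity of `ε`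
  have hs k : s (k + 1) = s k := Bool.eq_of_sub_apply_not_eq hΔ (g := fun σ => invFermi (ε σ k))
    (by simpa only [hεper _ k] using hgap (k + 1)) (hgap k)
  obtain ⟨a, f, hf, hodd, hfermi⟩ := exists_fermi_of_gap_of_pair (ν₁ := fun k => ε (s k) k)
    (ν₂ := fun k => ε (!s k) k) (fun k => hε _ k) (fun k => hε _ k)
    (fun k => by simp only [hs k, hεper _ k]) hgap
    (hzero.invFermi_pair_of_aligned hONB (hONB p) hs₁ hs₂ · 0)
  refine ⟨(e · p), a, f, (hnorm · p), horth p, hf, hodd, fun k => ?_⟩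
  rw [← ofReal_fermi, ← ofReal_fermi, (hfermi k).1, (hfermi k).2]
  exact wigner_eq_of_aligned (hONB k) (hONB p) (hs₁ k) (hs₂ k)

/-- Zero entropy production characterizes generalized Fermi-Dirac states.
The spin index `σ : Bool` encodes `↑ = true`, `↓ = false`. -/
theorem stmt_14 (ε : Bool → ℝ → ℝ) (e : Bool → ℝ → Fin 2 → ℂ)
    (hεper : ∀ σ, Function.Periodic (ε σ) 1)
    (heper : ∀ σ, Function.Periodic (e σ) 1)
    (hε : ∀ σ k, ε σ k ∈ Set.Ioo (0:ℝ) 1)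
    (hnorm : ∀ σ k, inn (e σ k) (e σ k) = 1)
    (horth : ∀ k, inn (e true k) (e false k) = 0)
    (hzero : ∀ k₁ k₂ k₃ k₄ : ℝ, (∃ m : ℤ, k₁ + k₂ - k₃ - k₄ = m) →
      ω k₁ + ω k₂ = ω k₃ + ω k₄ →
      ∀ σ₁ σ₂ σ₃ σ₄ : Bool,
        (Real.log ((1 - ε σ₁ k₁) / ε σ₁ k₁) + Real.log ((1 - ε σ₂ k₂) / ε σ₂ k₂)
          = Real.log ((1 - ε σ₃ k₃) / ε σ₃ k₃) + Real.log ((1 - ε σ₄ k₄) / ε σ₄ k₄)) ∨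
        inn (e σ₁ k₁) (e σ₃ k₃) * inn (e σ₂ k₂) (e σ₄ k₄)
          = inn (e σ₁ k₁) (e σ₄ k₄) * inn (e σ₂ k₂) (e σ₃ k₃)) :
    ∃ (w : Bool → Fin 2 → ℂ) (a : Bool → ℝ) (f : ℝ → ℝ),
      (∀ σ, inn (w σ) (w σ) = 1) ∧ inn (w true) (w false) = 0 ∧
      Function.Periodic f 1 ∧ (∀ k : ℝ, f k = -f (1/2 - k)) ∧
      ∀ k : ℝ,
        (ε true k : ℂ) • outer (e true k) + (ε false k : ℂ) • outer (e false k)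
          = ((Real.exp (f k - a true) + 1)⁻¹ : ℂ) • outer (w true)
            + ((Real.exp (f k - a false) + 1)⁻¹ : ℂ) • outer (w false) :=
  stmt_14_general ε e hεper hε hnorm horth hzero
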